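/- arXiv:2603.17177 — 2 statements merged into one kernel-verified Lean document; each statement's English description precedes it below -/
import Mathlib

section
/- Let α ∈ ℝ. For every N ∈ ℕ and every F : Λ^N → ℝ with Q_N F = 0, set v := G_N F and, for 0 ≤ n ≤ N, define the coarse-grained solution v_{−n} := L^{−α(N−n)} S_{N−n}Q_{N−n} v : Λ^n → ℝ and the effective force F_{−n} := L^{(2−α)(N−n)} S_{N−n}Q_{N−n} F : Λ^n → ℝ. Then for every 0 ≤ n ≤ N one has v_{−n} = G_n F_{−n}, where G_n := Σ_{k=1}^n L^{2(k−1)} P_k acts on functions on Λ^n. -/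
open MeasureTheory ProbabilityTheory Filter

namespace Hier

/-! ## The hierarchical lattice

A point of the unit lattice `Λ^N = (ℤ/L^Nℤ)^d` (for `L` odd) is encoded by its
balanced base-`L` digits: the coordinate `i` of the point is
`∑_{k<N} L^k · (x i k)`, where the digit `x i k ∈ ZMod L` is identified with its
representative in `{-(L-1)/2, …, (L-1)/2}`.  The level-`n` block `B_n(x)` is the
set of points sharing with `x` all digits of index `≥ n`, and the centre of a
level-`n` block is the point all of whose digits of index `< n` vanish. -/

variable (L d : ℕ)

/-- A point of the unit lattice `Λ^N`, in hierarchical digit coordinates. -/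
abbrev Pt (N : ℕ) : Type := Fin d → Fin N → ZMod L

/-- Transport along an equality of lattice sizes. -/
def reindex {M M' : ℕ} (h : M = M') (z : Pt L d M) : Pt L d M' :=
  fun i k => z i (Fin.cast h.symm k)

/-- Replace the `n` lowest digits of `x` by `a`; as `a` varies this enumerates
the level-`n` block `B_n(x)` of `x`. -/
def paste {N n : ℕ} (hn : n ≤ N) (x : Pt L d N) (a : Fin d → Fin n → ZMod L) :
    Pt L d N :=
  fun i k => if h : (k : ℕ) < n then a i ⟨k, h⟩ else x i k

/-- The centre of the level-`m` block of `Λ^N` indexed by `z ∈ Λ^{N-m}` (the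
point `L^m z`). -/
def embed {N m : ℕ} (hm : m ≤ N) (z : Pt L d (N - m)) : Pt L d N :=
  fun i k =>
    if h : m ≤ (k : ℕ) then z i ⟨(k : ℕ) - m, by have := k.isLt; omega⟩ else 0

variable [NeZero L]

/-- The averaging operator `Q_n g (x) = L^{-nd} ∑_{y ∈ B_n(x)} g(y)`. -/
noncomputable def Qop {N : ℕ} (n : ℕ) (hn : n ≤ N) (g : Pt L d N → ℝ) :
    Pt L d N → ℝ :=
  fun x => ((L : ℝ) ^ (n * d))⁻¹ * ∑ a : Fin d → Fin n → ZMod L, g (paste L d hn x a)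

/-- The fluctuation operator `P_n = Q_{n-1} - Q_n` (for `1 ≤ n ≤ N`). -/
noncomputable def Pop {N : ℕ} (n : ℕ) (hn : n ≤ N) (g : Pt L d N → ℝ) :
    Pt L d N → ℝ :=
  fun x => Qop L d (n - 1) (le_trans (Nat.sub_le n 1) hn) g x - Qop L d n hn g x

/-- The rescaling `S_m`, sending `f : Λ^N → ℝ` to `S_m f : Λ^{N-m} → ℝ`,
`(S_m f)(z) = f(L^m z)`.  In particular `scale … (Qop …)` is the coarse
graining `S_m Q_m`. -/
noncomputable def scale {N m : ℕ} (hm : m ≤ N) (f : Pt L d N → ℝ) :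
    Pt L d (N - m) → ℝ :=
  fun z => f (embed L d hm z)

/-- The hierarchical Green operator `G_N = ∑_{k=1}^N L^{2(k-1)} P_k`. -/
noncomputable def green (N : ℕ) (g : Pt L d N → ℝ) : Pt L d N → ℝ :=
  fun x => ∑ k : Fin N, (L : ℝ) ^ (2 * (k : ℕ)) * Pop L d ((k : ℕ) + 1) k.isLt g x

/-- The (negative of the) hierarchical Laplacian
`(-Δ_{H,N}) = ∑_{n=1}^N L^{-2(n-1)} P_n`. -/
noncomputable def lap (N : ℕ) (g : Pt L d N → ℝ) : Pt L d N → ℝ :=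
  fun x => ∑ k : Fin N, ((L : ℝ) ^ (2 * (k : ℕ)))⁻¹ * Pop L d ((k : ℕ) + 1) k.isLt g x

/-- The fluctuation propagator `Γ_m = ∑_{k=1}^m L^{2(k-1)} P_k` acting on
functions on `Λ^N` (`m ≤ N`). -/
noncomputable def gammaProp {N : ℕ} (m : ℕ) (hm : m ≤ N) (g : Pt L d N → ℝ) :
    Pt L d N → ℝ :=
  fun x => ∑ k : Fin m, (L : ℝ) ^ (2 * (k : ℕ)) *
    Pop L d ((k : ℕ) + 1) (le_trans k.isLt hm) g x

/-- `x` and `y` lie in the same level-`m` block of `Λ^N`. -/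
def sameBlock {N : ℕ} (m : ℕ) (x y : Pt L d N) : Prop :=
  ∀ (i : Fin d) (k : Fin N), m ≤ (k : ℕ) → x i k = y i k

end Hier

namespace Hier

variable (L d : ℕ) [NeZero L]

lemma reindex_rfl' {M : ℕ} (z : Pt L d M) : reindex L d rfl z = z := by
  funext i k; simp [reindex]

lemma card_digits (m : ℕ) : Fintype.card (Fin d → Fin m → ZMod L) = L ^ (m * d) := by
  simp [ZMod.card, ← pow_mul, mul_comm]

lemma Lpow_ne (e : ℕ) : ((L:ℝ) ^ e) ≠ 0 := by
  have : (L:ℝ) ≠ 0 := by exact_mod_cast (NeZero.ne L)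
  positivity

lemma Qop_const_mul {N n : ℕ} (hn : n ≤ N) (c : ℝ) (g : Pt L d N → ℝ) (x : Pt L d N) :
    Qop L d n hn (fun y => c * g y) x = c * Qop L d n hn g x := by
  simp only [Qop, ← Finset.mul_sum]; ring

lemma green_const_mul {M : ℕ} (c : ℝ) (g : Pt L d M → ℝ) (z : Pt L d M) :
    green L d M (fun y => c * g y) z = c * green L d M g z := by
  simp only [green, Pop, Qop_const_mul, Finset.mul_sum]
  exact Finset.sum_congr rfl fun k _ => by ring

lemma green_reindex {M M' : ℕ} (h : M = M') (g : Pt L d M' → ℝ) (z : Pt L d M) :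
    green L d M' g (reindex L d h z) = green L d M (fun w => g (reindex L d h w)) z := by
  subst h; simp only [reindex_rfl']

/-- merge: replace the lowest `j` digits of `a` by `b`. -/
def mergeLow {m j : ℕ} (hj : j ≤ m) (a : Fin d → Fin m → ZMod L)
    (b : Fin d → Fin j → ZMod L) : Fin d → Fin m → ZMod L :=
  fun i s => if h : (s : ℕ) < j then b i ⟨s, h⟩ else a i s

lemma paste_paste_le {N j m : ℕ} (hj : j ≤ m) (hm : m ≤ N) (x : Pt L d N)
    (a : Fin d → Fin m → ZMod L) (b : Fin d → Fin j → ZMod L) :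
    paste L d (hj.trans hm) (paste L d hm x a) b = paste L d hm x (mergeLow L d hj a b) := by
  funext i k
  simp only [paste, mergeLow]
  by_cases h1 : (k : ℕ) < j
  · rw [dif_pos h1, dif_pos (h1.trans_le hj), dif_pos h1]
  · rw [dif_neg h1]
    by_cases h2 : (k : ℕ) < m
    · rw [dif_pos h2, dif_pos h2, dif_neg h1]
    · rw [dif_neg h2, dif_neg h2]

lemma sum_mergeLow {m j : ℕ} (hj : j ≤ m) (f : (Fin d → Fin m → ZMod L) → ℝ) :
    ∑ a : Fin d → Fin m → ZMod L, ∑ b : Fin d → Fin j → ZMod L,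
      f (mergeLow L d hj a b) = (L : ℝ) ^ (j * d) * ∑ a, f a := by
  classical
  have hinv : Function.Involutive
      (fun p : (Fin d → Fin m → ZMod L) × (Fin d → Fin j → ZMod L) =>
        (mergeLow L d hj p.1 p.2, fun i s => p.1 i ⟨s, lt_of_lt_of_le s.isLt hj⟩)) := by
    rintro ⟨a, b⟩
    refine Prod.ext ?_ ?_
    · funext i s
      simp only [mergeLow]
      by_cases h : (s : ℕ) < j
      · rw [dif_pos h]
      · rw [dif_neg h, dif_neg h]
    · funext i s
      simp only [mergeLow]
      rw [dif_pos s.isLt]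
  have h2 : ∑ a : Fin d → Fin m → ZMod L, ∑ b : Fin d → Fin j → ZMod L,
      f (mergeLow L d hj a b)
      = ∑ p : (Fin d → Fin m → ZMod L) × (Fin d → Fin j → ZMod L),
        f (mergeLow L d hj p.1 p.2) := by
    rw [Fintype.sum_prod_type]
  have h3 := Equiv.sum_comp hinv.toPerm
      (fun p : (Fin d → Fin m → ZMod L) × (Fin d → Fin j → ZMod L) => f p.1)
  have h4 : ∑ p : (Fin d → Fin m → ZMod L) × (Fin d → Fin j → ZMod L),
      f (mergeLow L d hj p.1 p.2)
      = ∑ p : (Fin d → Fin m → ZMod L) × (Fin d → Fin j → ZMod L), f p.1 := h3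
  rw [h2, h4, Fintype.sum_prod_type]
  simp only [Finset.sum_const, Finset.card_univ, card_digits, nsmul_eq_mul, Nat.cast_pow]
  rw [← Finset.mul_sum]

lemma Qop_Qop_of_le {N j m : ℕ} (hj : j ≤ m) (hm : m ≤ N) (g : Pt L d N → ℝ) (x : Pt L d N) :
    Qop L d m hm (Qop L d j (hj.trans hm) g) x = Qop L d m hm g x := by
  simp only [Qop, paste_paste_le L d hj hm, ← Finset.mul_sum]
  rw [show ∀ (u : ℝ), ((L:ℝ)^(m*d))⁻¹ * (((L:ℝ)^(j*d))⁻¹ * u)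
      = ((L:ℝ)^(j*d))⁻¹ * (((L:ℝ)^(m*d))⁻¹ * u) from fun u => by ring]
  rw [Finset.mul_sum, ← Finset.mul_sum]
  rw [sum_mergeLow L d hj (fun a => g (paste L d hm x a))]
  rw [mul_left_comm ((L:ℝ)^(j*d))⁻¹ ((L:ℝ)^(m*d))⁻¹,
    ← mul_assoc ((L:ℝ)^(j*d))⁻¹, inv_mul_cancel₀ (Lpow_ne L (j*d)), one_mul]

lemma paste_paste_ge {N j m : ℕ} (hm : m ≤ j) (hj : j ≤ N) (x : Pt L d N)
    (a : Fin d → Fin m → ZMod L) (b : Fin d → Fin j → ZMod L) :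
    paste L d hj (paste L d (hm.trans hj) x a) b = paste L d hj x b := by
  funext i k
  simp only [paste]
  by_cases h1 : (k : ℕ) < j
  · rw [dif_pos h1, dif_pos h1]
  · rw [dif_neg h1, dif_neg h1, dif_neg (show ¬ (k:ℕ) < m by omega)]

lemma Qop_Qop_of_ge {N j m : ℕ} (hm : m ≤ j) (hj : j ≤ N) (g : Pt L d N → ℝ) (x : Pt L d N) :
    Qop L d m (hm.trans hj) (Qop L d j hj g) x = Qop L d j hj g x := by
  simp only [Qop, paste_paste_ge L d hm hj]
  rw [Finset.sum_const, Finset.card_univ, card_digits, nsmul_eq_mul, Nat.cast_pow]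
  rw [← mul_assoc, inv_mul_cancel₀ (Lpow_ne L (m*d)), one_mul]

/-- split digits of `Fin k` into low `m` and high `k - m`. -/
def splitEquiv (m k : ℕ) (hmk : m ≤ k) :
    (Fin d → Fin k → ZMod L) ≃ (Fin d → Fin m → ZMod L) × (Fin d → Fin (k - m) → ZMod L) where
  toFun c := (fun i s => c i ⟨s, lt_of_lt_of_le s.isLt hmk⟩,
              fun i s => c i ⟨m + s, by have := s.isLt; omega⟩)
  invFun p := fun i t =>
    if h : (t : ℕ) < m then p.1 i ⟨t, h⟩ else p.2 i ⟨(t : ℕ) - m, by have := t.isLt; omega⟩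
  left_inv c := by
    funext i t
    by_cases h : (t : ℕ) < m
    · simp only [dif_pos h]
    · simp only [dif_neg h]
      congr 1
      exact Fin.ext (by simp; omega)
  right_inv p := by
    refine Prod.ext ?_ ?_
    · funext i s
      have hs : ((⟨(s:ℕ), lt_of_lt_of_le s.isLt hmk⟩ : Fin k) : ℕ) < m := by
        simpa using s.isLt
      simp only [dif_pos hs]
    · funext i s
      have hs' : ¬ (m + (s:ℕ) < m) := by omega
      dsimp only
      split
      · exact absurd ‹_› hs'
      · exact congrArg (p.2 i)
          ((Fin.ext (show m + (s:ℕ) - m = (s:ℕ) by omega)) :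
            (⟨m + (s:ℕ) - m, by have := s.isLt; omega⟩ : Fin (k - m)) = s)

lemma paste_embed {N m k : ℕ} (hm : m ≤ N) (hmk : m ≤ k) (hk : k ≤ N)
    (z : Pt L d (N - m)) (a : Fin d → Fin m → ZMod L) (b : Fin d → Fin (k - m) → ZMod L) :
    paste L d hk (embed L d hm z) ((splitEquiv L d m k hmk).symm (a, b)) =
      paste L d hm (embed L d hm (paste L d (by omega : k - m ≤ N - m) z b)) a := by
  funext i t
  simp only [paste, embed, splitEquiv, Equiv.coe_fn_symm_mk]
  by_cases h1 : (t : ℕ) < m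
  · rw [dif_pos (show (t:ℕ) < k by omega), dif_pos h1, dif_pos h1]
  · rw [dif_neg h1]
    by_cases h2 : (t : ℕ) < k
    · rw [dif_pos h2, dif_neg (show ¬ (((⟨(t:ℕ), h2⟩ : Fin k)) : ℕ) < m by simpa using h1),
        dif_pos (show m ≤ (t:ℕ) by omega),
        dif_pos (show ((⟨(t:ℕ) - m, by have := t.isLt; omega⟩ : Fin (N - m)) : ℕ) < k - m by
          simp; omega)]
    · rw [dif_neg h2, dif_pos (show m ≤ (t:ℕ) by omega), dif_pos (show m ≤ (t:ℕ) by omega),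
        dif_neg (show ¬ ((⟨(t:ℕ) - m, by have := t.isLt; omega⟩ : Fin (N - m)) : ℕ) < k - m by
          simp; omega)]

lemma Qop_embed {N m k : ℕ} (hm : m ≤ N) (hmk : m ≤ k) (hk : k ≤ N)
    (g : Pt L d N → ℝ) (z : Pt L d (N - m)) :
    Qop L d k hk g (embed L d hm z) =
      Qop L d (k - m) (by omega) (scale L d hm (Qop L d m hm g)) z := by
  simp only [Qop, scale]
  rw [← Equiv.sum_comp (splitEquiv L d m k hmk).symm
    (fun c => g (paste L d hk (embed L d hm z) c))]
  have h2 : ∑ p : (Fin d → Fin m → ZMod L) × (Fin d → Fin (k - m) → ZMod L),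
      g (paste L d hk (embed L d hm z) ((splitEquiv L d m k hmk).symm p))
      = ∑ a : Fin d → Fin m → ZMod L, ∑ b : Fin d → Fin (k - m) → ZMod L,
        g (paste L d hk (embed L d hm z) ((splitEquiv L d m k hmk).symm (a, b))) := by
    rw [Fintype.sum_prod_type]
  rw [h2]
  simp only [paste_embed L d hm hmk hk]
  rw [Finset.sum_comm]
  have hcoef : ((L:ℝ) ^ (k * d))⁻¹ = ((L:ℝ) ^ ((k-m) * d))⁻¹ * ((L:ℝ) ^ (m * d))⁻¹ := by
    rw [← mul_inv, ← pow_add]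
    congr 2
    rw [← Nat.add_mul, Nat.sub_add_cancel hmk]
  rw [hcoef, Finset.mul_sum, Finset.mul_sum]
  exact Finset.sum_congr rfl fun b _ => by rw [mul_assoc]

end Hier

namespace Hier

variable (L d : ℕ) [NeZero L]

lemma Qop_congr {M : ℕ} {n n' : ℕ} (h : n = n') (hn : n ≤ M) (hn' : n' ≤ M)
    (g : Pt L d M → ℝ) (x : Pt L d M) :
    Qop L d n hn g x = Qop L d n' hn' g x := by subst h; rfl

lemma main_identity {N m : ℕ} (hm : m ≤ N) (F : Pt L d N → ℝ) (z : Pt L d (N - m)) :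
    Qop L d m hm (green L d N F) (embed L d hm z) =
      (L:ℝ) ^ (2 * m) * green L d (N - m) (scale L d hm (Qop L d m hm F)) z := by
  classical
  let S : Pt L d (N - m) → ℝ := scale L d hm (Qop L d m hm F)
  let f : ℕ → ℝ := fun k =>
    if h : k < N ∧ m ≤ k then
      (L:ℝ)^(2*k) * (Qop L d (k - m) (by omega) S z - Qop L d (k + 1 - m) (by omega) S z)
    else 0
  let g : ℕ → ℝ := fun j =>
    if h : j < N - m then
      (L:ℝ)^(2*j) * (Qop L d j (by omega) S z - Qop L d (j+1) (by omega) S z)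
    else 0
  have expand : Qop L d m hm (green L d N F) (embed L d hm z) = ∑ k : Fin N, f (k:ℕ) := by
    have e1 : Qop L d m hm (green L d N F) (embed L d hm z)
        = ((L:ℝ)^(m*d))⁻¹ * ∑ a : Fin d → Fin m → ZMod L, ∑ k : Fin N,
            (L:ℝ)^(2*(k:ℕ)) *
              (Qop L d (k:ℕ) (Nat.le_of_lt k.isLt) F (paste L d hm (embed L d hm z) a)
                - Qop L d ((k:ℕ)+1) k.isLt F (paste L d hm (embed L d hm z) a)) := rfl
    rw [e1, Finset.sum_comm, Finset.mul_sum]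
    refine Finset.sum_congr rfl fun k _ => ?_
    have step1 : ((L:ℝ)^(m*d))⁻¹ * ∑ a : Fin d → Fin m → ZMod L,
          (L:ℝ)^(2*(k:ℕ)) *
            (Qop L d (k:ℕ) (Nat.le_of_lt k.isLt) F (paste L d hm (embed L d hm z) a)
              - Qop L d ((k:ℕ)+1) k.isLt F (paste L d hm (embed L d hm z) a))
        = (L:ℝ)^(2*(k:ℕ)) *
            (Qop L d m hm (Qop L d (k:ℕ) (Nat.le_of_lt k.isLt) F) (embed L d hm z)
              - Qop L d m hm (Qop L d ((k:ℕ)+1) k.isLt F) (embed L d hm z)) := by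
      rw [← Finset.mul_sum, Finset.sum_sub_distrib]
      show _ = (L:ℝ)^(2*(k:ℕ)) *
        (((L:ℝ)^(m*d))⁻¹ * ∑ a : Fin d → Fin m → ZMod L,
            Qop L d (k:ℕ) (Nat.le_of_lt k.isLt) F (paste L d hm (embed L d hm z) a)
          - ((L:ℝ)^(m*d))⁻¹ * ∑ a : Fin d → Fin m → ZMod L,
            Qop L d ((k:ℕ)+1) k.isLt F (paste L d hm (embed L d hm z) a))
      ring
    rw [step1]
    by_cases hk : m ≤ (k:ℕ)
    · rw [Qop_Qop_of_ge L d hk (Nat.le_of_lt k.isLt),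
        Qop_Qop_of_ge L d (le_trans hk (Nat.le_succ _)) k.isLt,
        Qop_embed L d hm hk (Nat.le_of_lt k.isLt),
        Qop_embed L d hm (le_trans hk (Nat.le_succ _)) k.isLt]
      show _ = dite _ _ _
      rw [dif_pos (⟨k.isLt, hk⟩ : (k:ℕ) < N ∧ m ≤ (k:ℕ))]
    · rw [Qop_Qop_of_le L d (show (k:ℕ) ≤ m by omega) hm,
        Qop_Qop_of_le L d (show (k:ℕ)+1 ≤ m by omega) hm, sub_self, mul_zero]
      show (0:ℝ) = dite _ _ _
      rw [dif_neg (show ¬ ((k:ℕ) < N ∧ m ≤ (k:ℕ)) from fun h => hk h.2)]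
  rw [expand, Fin.sum_univ_eq_sum_range f N, Finset.range_eq_Ico,
    ← Finset.sum_Ico_consecutive f (Nat.zero_le m) hm]
  have h0 : ∑ k ∈ Finset.Ico 0 m, f k = 0 := by
    refine Finset.sum_eq_zero fun k hk => ?_
    have : k < m := (Finset.mem_Ico.mp hk).2
    show dite _ _ _ = (0:ℝ)
    rw [dif_neg (show ¬ (k < N ∧ m ≤ k) from fun h => by omega)]
  rw [h0, zero_add, Finset.sum_Ico_eq_sum_range]
  have hg : green L d (N - m) S z = ∑ j ∈ Finset.range (N - m), g j := by
    rw [← Fin.sum_univ_eq_sum_range g (N - m)]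
    refine Finset.sum_congr rfl fun j _ => ?_
    show _ = dite _ _ _
    rw [dif_pos j.isLt]
    rfl
  show _ = (L:ℝ)^(2*m) * green L d (N - m) S z
  rw [hg, Finset.mul_sum]
  refine Finset.sum_congr rfl fun i hi => ?_
  have hiN : i < N - m := Finset.mem_range.mp hi
  have e2 : f (m + i) = (L:ℝ)^(2*(m+i)) *
      (Qop L d i (by omega) S z - Qop L d (i+1) (by omega) S z) := by
    show dite _ _ _ = _
    rw [dif_pos (show m + i < N ∧ m ≤ m + i by omega)]
    rw [Qop_congr L d (show m + i - m = i by omega) (by omega) (by omega) S z,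
      Qop_congr L d (show m + i + 1 - m = i + 1 by omega) (by omega) (by omega) S z]
  have e3 : g i = (L:ℝ)^(2*i) *
      (Qop L d i (by omega) S z - Qop L d (i+1) (by omega) S z) := by
    show dite _ _ _ = _
    rw [dif_pos hiN]
  rw [e2, e3, ← mul_assoc, ← pow_add]
  congr 2
  ring

end Hier


open Hier in
/-- Let `α ∈ ℝ`. For every `N ∈ ℕ` and every `F : Λ^N → ℝ`
with `Q_N F = 0`, set `v := G_N F` and, for `0 ≤ n ≤ N`, define the
coarse-grained solution `v_{-n} := L^{-α(N-n)} S_{N-n} Q_{N-n} v : Λ^n → ℝ`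
and the effective force `F_{-n} := L^{(2-α)(N-n)} S_{N-n} Q_{N-n} F : Λ^n → ℝ`.
Then `v_{-n} = G_n F_{-n}`. -/
theorem statement_5 (L d : ℕ) [NeZero L] (hL : Odd L) (hL3 : 3 ≤ L) (hd : 1 ≤ d)
    (α : ℝ) (N n : ℕ) (hn : n ≤ N) (F : Pt L d N → ℝ)
    (hF : ∀ x, Qop L d N le_rfl F x = 0) :
    ∀ z : Pt L d n,
      (L : ℝ) ^ (-(α * ((N : ℝ) - (n : ℝ)))) *
          scale L d (Nat.sub_le N n)
            (Qop L d (N - n) (Nat.sub_le N n) (green L d N F))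
            (reindex L d (show n = N - (N - n) by omega) z) =
        green L d n (fun w : Pt L d n =>
          (L : ℝ) ^ (((2 : ℝ) - α) * ((N : ℝ) - (n : ℝ))) *
            scale L d (Nat.sub_le N n)
              (Qop L d (N - n) (Nat.sub_le N n) F)
              (reindex L d (show n = N - (N - n) by omega) w)) z := by
  intro z
  have hE : n = N - (N - n) := by omega
  have hm : N - n ≤ N := Nat.sub_le N n
  have hL0 : (0:ℝ) < (L:ℝ) := by
    have : 0 < L := by omega
    exact_mod_cast this
  have key : (L:ℝ) ^ (-(α * ((N : ℝ) - (n : ℝ)))) * (L:ℝ) ^ (2 * (N - n)) =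
      (L:ℝ) ^ (((2 : ℝ) - α) * ((N : ℝ) - (n : ℝ))) := by
    have hcast : ((2 * (N - n) : ℕ) : ℝ) = 2 * ((N:ℝ) - (n:ℝ)) := by
      push_cast [Nat.cast_sub hn]
      ring
    rw [show (L:ℝ) ^ (2 * (N - n)) = (L:ℝ) ^ ((2 * (N - n) : ℕ) : ℝ) from
      (Real.rpow_natCast _ _).symm, ← Real.rpow_add hL0, hcast]
    congr 1
    ring
  have lhs1 : scale L d (Nat.sub_le N n)
      (Qop L d (N - n) (Nat.sub_le N n) (green L d N F))
      (reindex L d (show n = N - (N - n) by omega) z)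
      = Qop L d (N - n) hm (green L d N F) (embed L d hm (reindex L d hE z)) := rfl
  rw [lhs1, main_identity L d hm F (reindex L d hE z),
    green_reindex L d hE (scale L d hm (Qop L d (N - n) hm F)) z,
    green_const_mul L d ((L : ℝ) ^ (((2 : ℝ) - α) * ((N : ℝ) - (n : ℝ))))
      (fun w => scale L d (Nat.sub_le N n) (Qop L d (N - n) (Nat.sub_le N n) F)
        (reindex L d (show n = N - (N - n) by omega) w)) z,
    ← mul_assoc, key]
end

section
/- Fix κ_s ∈ (0, 1/8] and r ≥ 1. There exists L₀ ∈ ℕ, depending only on r and κ_s, such that for every odd integer L ≥ L₀, every g ∈ (0, 1], every N ∈ ℕ, and every sample point ω in the event Ω_g: there exist remainder fields (Ψ^{(N)}_{−n})_{0≤n≤N}, (R^{(N)}_{−n+1})_{1≤n≤N} satisfying the fixed-point recursion, they are unique, and every such family satisfies max_{0≤n≤N} L^{−κ_s n} max_{x∈Λ^n} |Ψ^{(N)}_{−n}(x)|^{1/3} ≤ (2g)^{−1}. -/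
open MeasureTheory ProbabilityTheory Filter

namespace Hier

/-! ## The hierarchical lattice

A point of the unit lattice `Λ^N = (ℤ/L^Nℤ)^d` (for `L` odd) is encoded by its
balanced base-`L` digits: the coordinate `i` of the point is
`∑_{k<N} L^k · (x i k)`, where the digit `x i k ∈ ZMod L` is identified with its
representative in `{-(L-1)/2, …, (L-1)/2}`.  The level-`n` block `B_n(x)` is the
set of points sharing with `x` all digits of index `≥ n`, and the centre of a
level-`n` block is the point all of whose digits of index `< n` vanish. -/

variable (L d : ℕ)

variable [NeZero L]

variable {Ω : Type*} [MeasurableSpace Ω]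

/-- A **consistent hierarchical white noise**: a family `(ξ_{-n})_{n ∈ ℕ}` of
random functions `Λ^n → ℝ` such that for every `n` the variables
`(ξ_{-n}(x))_{x ∈ Λ^n}` are independent standard Gaussians and, for every `n`,
`ξ_{-n} = L^{2-α} · S₁Q₁ ξ_{-(n+1)}` almost surely, where `α := 2 - d/2`. -/
structure WhiteNoise (P : Measure Ω) where
  ξ : (n : ℕ) → Pt L d n → Ω → ℝ
  meas : ∀ n x, Measurable (ξ n x)
  gauss : ∀ n x, P.map (ξ n x) = gaussianReal 0 1
  indep : ∀ n, iIndepFun (ξ n) P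
  consistent : ∀ n : ℕ, ∀ᵐ ω ∂P, ∀ z : Pt L d n,
    ξ n z ω = (L : ℝ) ^ ((2 : ℝ) - ((2 : ℝ) - (d : ℝ) / 2)) *
      scale L d (Nat.le_add_left 1 n)
        (Qop L d 1 (Nat.le_add_left 1 n) (fun y => ξ (n + 1) y ω))
        (reindex L d (by omega) z)

/-- The Wick product `(f ⋄ P₁f)(x) = f(x)·(P₁f)(x) − (1 − L^{-d})` of a field
of independent standard Gaussians with its `P₁`-fluctuation. -/
noncomputable def wickP1 {N : ℕ} (hN : 1 ≤ N) (f : Pt L d N → ℝ) :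
    Pt L d N → ℝ :=
  fun x => f x * Pop L d 1 hN f x - (1 - ((L : ℝ) ^ d)⁻¹)

/-- The second-chaos field
`db^{(N)}_{-n} = ∑_{k=1}^{N-n} L^{(2-2α)k} S_k Q_k (ξ_{-n-k} ⋄ P₁ ξ_{-n-k})`,
with `α := 2 - d/2`. -/
noncomputable def db {P : Measure Ω} (W : WhiteNoise L d P) (N n : ℕ) (ω : Ω) :
    Pt L d n → ℝ :=
  fun z => ∑ k : Fin (N - n),
    (L : ℝ) ^ (((2 : ℝ) - 2 * ((2 : ℝ) - (d : ℝ) / 2)) * (((k : ℕ) : ℝ) + 1)) *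
      scale L d (Nat.le_add_left ((k : ℕ) + 1) n)
        (Qop L d ((k : ℕ) + 1) (Nat.le_add_left ((k : ℕ) + 1) n)
          (wickP1 L d (by omega) (fun y => W.ξ (n + ((k : ℕ) + 1)) y ω)))
        (reindex L d (by omega) z)

/-- `L^{-κ_s n} · max( max_{x ∈ Λ^n} |ξ_{-n}(x)| , max_{x ∈ Λ^n} |db^{(N)}_{-n}(x)|^{1/2} )`. -/
noncomputable def normBlock {P : Measure Ω} (W : WhiteNoise L d P) (κs : ℝ)
    (N n : ℕ) (ω : Ω) : ℝ :=
  (L : ℝ) ^ (-(κs * (n : ℝ))) *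
    max (⨆ x : Pt L d n, |W.ξ n x ω|)
      (⨆ x : Pt L d n, |db L d W N n ω x| ^ ((1 : ℝ) / 2))

/-- The norm `⦀ξ, db⦀ = sup_{N ∈ ℕ} max_{0 ≤ n ≤ N} normBlock(N, n)`,
valued in `ℝ≥0∞`. -/
noncomputable def enorm {P : Measure Ω} (W : WhiteNoise L d P) (κs : ℝ)
    (ω : Ω) : ENNReal :=
  ⨆ (N : ℕ) (n : Fin (N + 1)), ENNReal.ofReal (normBlock L d W κs N n ω)

/-- The good event `Ω_g = { ⦀ξ, db⦀ ≤ (2g)⁻¹ }`. -/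
def goodEvent {P : Measure Ω} (W : WhiteNoise L d P) (κs g : ℝ) : Set Ω :=
  {ω | enorm L d W κs ω ≤ ENNReal.ofReal (2 * g)⁻¹}


/-! ### The d = 2 renormalisation-group data -/

/-- The effective coupling constant `λ_{-n} = L^{-n} g` (d = 2, α = 1). -/
noncomputable def lamC (g : ℝ) (n : ℕ) : ℝ := ((L : ℝ) ^ n)⁻¹ * g

/-- The effective mass `μ_{-n} = L^{-2n} (r − (1 − L^{-2}) n g²)` (d = 2). -/
noncomputable def muC (r g : ℝ) (n : ℕ) : ℝ :=
  ((L : ℝ) ^ (2 * n))⁻¹ * (r - (1 - ((L : ℝ) ^ 2)⁻¹) * (n : ℝ) * g ^ 2)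

/-- The level-`N` bare equation (d = 2):
`(-Δ_{H,N}) v = (λ_{-N} ξ_{-N} + μ_{-N}) v + γ_{-N}` pointwise on `Λ^N`,
with `γ_{-N} = L^{-N}`. -/
def IsBareSolution {P : Measure Ω} (W : WhiteNoise L 2 P) (ω : Ω) (g r : ℝ)
    (N : ℕ) (v : Pt L 2 N → ℝ) : Prop :=
  ∀ x, lap L 2 N v x =
    (lamC L g N * W.ξ N x ω + muC L r g N) * v x + ((L : ℝ) ^ N)⁻¹

/-- The coarse graining `v^{(N)}_{-n} = L^{-(N-n)} S_{N-n} Q_{N-n} v : Λ^n → ℝ`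
(d = 2, α = 1). -/
noncomputable def coarse (N n : ℕ) (hn : n ≤ N) (v : Pt L 2 N → ℝ) :
    Pt L 2 n → ℝ :=
  fun z => ((L : ℝ) ^ (N - n))⁻¹ *
    scale L 2 (Nat.sub_le N n) (Qop L 2 (N - n) (Nat.sub_le N n) v)
      (reindex L 2 (by omega) z)

/-- The fixed-point recursion (d = 2, α = 1, so `L^{2-3α} = L^{-1}`) for the
remainder fields `Ψ^{(N)}_{-n} : Λ^n → ℝ` (`0 ≤ n ≤ N`) and
`R^{(N)}_{-n+1} : Λ^n → ℝ` (`1 ≤ n ≤ N`): `Ψ^{(N)}_{-N} = 0` together with the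
implicit equation for `R^{(N)}_{-n+1}` and the update for `Ψ^{(N)}_{-n+1}`. -/
def IsRemainder {P : Measure Ω} (W : WhiteNoise L 2 P) (ω : Ω) (g r : ℝ)
    (N : ℕ) (Ψ : ∀ n : ℕ, Pt L 2 n → ℝ) (R : ∀ n : ℕ, Pt L 2 n → ℝ) : Prop :=
  Ψ N = 0 ∧
  ∀ (n : ℕ) (hn1 : 1 ≤ n), n ≤ N →
    (R n = fun x =>
        Pop L 2 1 hn1 (db L 2 W N n ω) x
        + Pop L 2 1 hn1
            (fun y => W.ξ n y ω * Pop L 2 1 hn1 (fun y' => W.ξ n y' ω) y) x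
        + lamC L g n * Pop L 2 1 hn1 (Ψ n) x
        + lamC L g n * Pop L 2 1 hn1 (fun y => W.ξ n y ω * R n y) x
        + lamC L g n * Pop L 2 1 hn1
            (fun y => db L 2 W N n ω y * Pop L 2 1 hn1 (fun y' => W.ξ n y' ω) y) x
        + lamC L g n ^ 2 * Pop L 2 1 hn1 (fun y => db L 2 W N n ω y * R n y) x
        + lamC L g n ^ 2 * Pop L 2 1 hn1
            (fun y => Ψ n y * Pop L 2 1 hn1 (fun y' => W.ξ n y' ω) y) x
        + lamC L g n ^ 3 * Pop L 2 1 hn1 (fun y => Ψ n y * R n y) x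
        + muC L r g n * (lamC L g n)⁻¹ * Pop L 2 1 hn1 (fun y => W.ξ n y ω) x
        + muC L r g n * R n x) ∧
    (Ψ (n - 1) = fun z =>
        ((L : ℝ))⁻¹ *
          (scale L 2 hn1 (Qop L 2 1 hn1 (Ψ n)) z
          + scale L 2 hn1 (Qop L 2 1 hn1 (fun y => W.ξ n y ω * R n y)) z
          + scale L 2 hn1 (Qop L 2 1 hn1
              (fun y => db L 2 W N n ω y * Pop L 2 1 hn1 (fun y' => W.ξ n y' ω) y)) z
          + lamC L g n * scale L 2 hn1 (Qop L 2 1 hn1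
              (fun y => db L 2 W N n ω y * R n y)) z
          + lamC L g n * scale L 2 hn1 (Qop L 2 1 hn1
              (fun y => Ψ n y * Pop L 2 1 hn1 (fun y' => W.ξ n y' ω) y)) z
          + lamC L g n ^ 2 * scale L 2 hn1 (Qop L 2 1 hn1
              (fun y => Ψ n y * R n y)) z))

/-- The unique point of the one-point lattice `Λ^0`. -/
def pt0 : Pt L 2 0 := fun _ i => Fin.elim0 i

end Hier

/-!
Work level by level in the sup norm. On `Ω_g` one has `‖ξ_{-n}‖ ≤ B_n` and `‖db_{-n}‖ ≤ B_n²` with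
`B_n = L^{κ_s n} / (2g)`. If moreover `‖Ψ_{-n}‖ ≤ B_n³`, every `R`-dependent term of the implicit
equation for `R_{-n+1}` carries a factor `λ_{-n} B_n ≤ 1/20` or `|μ_{-n}| ≤ 1/10`, so the equation is
a `1/2`-contraction: its solution exists, is unique and satisfies `‖R_{-n+1}‖ ≤ 16 B_n²`. The update
then gives `‖Ψ_{-n+1}‖ ≤ 20 B_n³ / L ≤ B_{n-1}³`, because `L^{1 - 3κ_s} ≥ 20`. Downward induction
from `Ψ_{-N} = 0` yields existence, uniqueness and the bound `‖Ψ_{-n}‖ ≤ B_n³` together.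
-/

lemma le_rpow_of_sq_le {c x e : ℝ} (hc : 0 ≤ c) (hcx : c ^ 2 ≤ x) (hx : 1 ≤ x) (he : 1 / 2 ≤ e) :
    c ≤ x ^ e :=
  calc c ≤ √x := (Real.le_sqrt hc (by linarith)).2 hcx
    _ = x ^ (1 / 2 : ℝ) := Real.sqrt_eq_rpow x
    _ ≤ x ^ e := Real.rpow_le_rpow_of_exponent_le hx he

lemma add_natCast_le_mul_pow {r x : ℝ} (hr : 0 ≤ r) (hx : 2 ≤ x) {n : ℕ} (hn : 1 ≤ n) :
    r + n ≤ (r + 1) * x ^ (n - 1) := by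
  have h1 : 1 ≤ x ^ (n - 1) := one_le_pow₀ (by linarith)
  have h2 : (n : ℝ) ≤ x ^ (n - 1) := by
    have : n ≤ 2 ^ (n - 1) := by have := Nat.lt_two_pow_self (n := n - 1); omega
    calc (n : ℝ) ≤ 2 ^ (n - 1) := by exact_mod_cast this
      _ ≤ x ^ (n - 1) := pow_le_pow_left₀ (by norm_num) hx _
  nlinarith

namespace Hier

noncomputable def goodBound (L : ℕ) (κs g : ℝ) (n : ℕ) : ℝ := (L : ℝ) ^ (κs * n) * (2 * g)⁻¹

variable {L d : ℕ}

section

variable [NeZero L]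

section Operators

variable {N : ℕ}

lemma Qop_sub {n : ℕ} (hn : n ≤ N) (f g : Pt L d N → ℝ) :
    Qop L d n hn (f - g) = Qop L d n hn f - Qop L d n hn g := by
  funext x
  simp [Qop, Finset.sum_sub_distrib, mul_sub]

lemma Pop_sub {n : ℕ} (hn : n ≤ N) (f g : Pt L d N → ℝ) :
    Pop L d n hn (f - g) = Pop L d n hn f - Pop L d n hn g := by
  funext x
  simp only [Pop, Qop_sub, Pi.sub_apply]
  ring

lemma Pop_zero {n : ℕ} (hn : n ≤ N) : Pop L d n hn 0 = 0 := by
  simpa using Pop_sub hn 0 0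

lemma norm_Qop_le {n : ℕ} (hn : n ≤ N) (f : Pt L d N → ℝ) : ‖Qop L d n hn f‖ ≤ ‖f‖ := by
  have hcard : (Fintype.card (Fin d → Fin n → ZMod L) : ℝ) = (L : ℝ) ^ (n * d) := by
    simp [ZMod.card, ← pow_mul, mul_comm]
  refine (pi_norm_le_iff_of_nonneg (norm_nonneg f)).2 fun x => ?_
  calc ‖Qop L d n hn f x‖
      = ((L : ℝ) ^ (n * d))⁻¹ * |∑ a : Fin d → Fin n → ZMod L, f (paste L d hn x a)| := by
        simp [Qop]
    _ ≤ ((L : ℝ) ^ (n * d))⁻¹ * ∑ _a : Fin d → Fin n → ZMod L, ‖f‖ := by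
        gcongr
        exact (Finset.abs_sum_le_sum_abs _ _).trans
          (Finset.sum_le_sum fun a _ => norm_le_pi_norm f _)
    _ = ‖f‖ := by
        rw [Finset.sum_const, Finset.card_univ, nsmul_eq_mul, hcard, inv_mul_cancel_left₀]
        exact pow_ne_zero _ (Nat.cast_ne_zero.2 (NeZero.ne L))

lemma norm_Pop_le {n : ℕ} (hn : n ≤ N) (f : Pt L d N → ℝ) : ‖Pop L d n hn f‖ ≤ 2 * ‖f‖ :=
  calc ‖Pop L d n hn f‖ = ‖Qop L d (n - 1) _ f - Qop L d n hn f‖ := rfl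
    _ ≤ ‖f‖ + ‖f‖ := norm_sub_le_of_le (norm_Qop_le _ f) (norm_Qop_le hn f)
    _ = 2 * ‖f‖ := by ring

lemma norm_scale_le {m : ℕ} (hm : m ≤ N) (f : Pt L d N → ℝ) : ‖scale L d hm f‖ ≤ ‖f‖ :=
  (pi_norm_le_iff_of_nonneg (norm_nonneg f)).2 fun _ => norm_le_pi_norm f _

lemma norm_Pop_mul_le {n : ℕ} (hn : n ≤ N) {f h : Pt L d N → ℝ} {a b : ℝ} (hf : ‖f‖ ≤ a)
    (hh : ‖h‖ ≤ b) : ‖Pop L d n hn (f * h)‖ ≤ 2 * (a * b) :=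
  (norm_Pop_le hn _).trans <| by gcongr; exact norm_mul_le_of_le hf hh

lemma norm_scale_Qop_mul_le {m : ℕ} (hm : m ≤ N) {f h : Pt L d N → ℝ} {a b : ℝ} (hf : ‖f‖ ≤ a)
    (hh : ‖h‖ ≤ b) : ‖scale L d hm (Qop L d m hm (f * h))‖ ≤ a * b :=
  (norm_scale_le hm _).trans <| (norm_Qop_le hm _).trans <| norm_mul_le_of_le hf hh

end Operators

section Level

variable {n : ℕ} (hn : 1 ≤ n) (ξ db Ψ : Pt L d n → ℝ) (lam mu : ℝ)

noncomputable def remainderMap (R : Pt L d n → ℝ) : Pt L d n → ℝ :=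
  Pop L d 1 hn db + Pop L d 1 hn (ξ * Pop L d 1 hn ξ) + lam • Pop L d 1 hn Ψ
    + lam • Pop L d 1 hn (ξ * R) + lam • Pop L d 1 hn (db * Pop L d 1 hn ξ)
    + lam ^ 2 • Pop L d 1 hn (db * R) + lam ^ 2 • Pop L d 1 hn (Ψ * Pop L d 1 hn ξ)
    + lam ^ 3 • Pop L d 1 hn (Ψ * R) + (mu * lam⁻¹) • Pop L d 1 hn ξ + mu • R

noncomputable def psiUpdate (R : Pt L d n → ℝ) : Pt L d (n - 1) → ℝ :=
  (L : ℝ)⁻¹ • (scale L d hn (Qop L d 1 hn Ψ) + scale L d hn (Qop L d 1 hn (ξ * R))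
    + scale L d hn (Qop L d 1 hn (db * Pop L d 1 hn ξ))
    + lam • scale L d hn (Qop L d 1 hn (db * R))
    + lam • scale L d hn (Qop L d 1 hn (Ψ * Pop L d 1 hn ξ))
    + lam ^ 2 • scale L d hn (Qop L d 1 hn (Ψ * R)))

variable {ξ db Ψ lam mu} {B : ℝ} (hξ : ‖ξ‖ ≤ B) (hdb : ‖db‖ ≤ B ^ 2) (hΨ : ‖Ψ‖ ≤ B ^ 3)
  (hlam : 0 ≤ lam) (hlamB : lam * B ≤ 1 / 20)

include hξ hdb hΨ hlam hlamB

lemma dist_remainderMap_le (hmu : |mu| ≤ 1 / 10) (R R' : Pt L d n → ℝ) :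
    dist (remainderMap hn ξ db Ψ lam mu R) (remainderMap hn ξ db Ψ lam mu R') ≤ dist R R' / 2 := by
  have hB : 0 ≤ B := (norm_nonneg ξ).trans hξ
  have hdiff : remainderMap hn ξ db Ψ lam mu R - remainderMap hn ξ db Ψ lam mu R'
      = lam • Pop L d 1 hn (ξ * (R - R')) + lam ^ 2 • Pop L d 1 hn (db * (R - R'))
        + lam ^ 3 • Pop L d 1 hn (Ψ * (R - R')) + mu • (R - R') := by
    simp only [remainderMap, mul_sub, Pop_sub, smul_sub]
    abel
  rw [dist_eq_norm, dist_eq_norm, hdiff]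
  set D := ‖R - R'‖ with hD
  have hu : 2 * (lam * B) + 2 * (lam * B) ^ 2 + 2 * (lam * B) ^ 3 ≤ 2 / 5 := by
    have : 0 ≤ lam * B := by positivity
    nlinarith
  calc _ ≤ lam * (2 * (B * D)) + lam ^ 2 * (2 * (B ^ 2 * D)) + lam ^ 3 * (2 * (B ^ 3 * D))
        + |mu| * D := by
        refine norm_add₄_le.trans (add_le_add (add_le_add (add_le_add ?_ ?_) ?_) ?_)
        · rw [norm_smul_of_nonneg hlam]; gcongr; exact norm_Pop_mul_le hn hξ hD.ge
        · rw [norm_smul_of_nonneg (by positivity)]; gcongr; exact norm_Pop_mul_le hn hdb hD.ge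
        · rw [norm_smul_of_nonneg (by positivity)]; gcongr; exact norm_Pop_mul_le hn hΨ hD.ge
        · rw [norm_smul, Real.norm_eq_abs]
    _ ≤ (2 * (lam * B) + 2 * (lam * B) ^ 2 + 2 * (lam * B) ^ 3 + 1 / 10) * D := by
        linear_combination D * hmu
    _ ≤ (2 / 5 + 1 / 10) * D := by gcongr
    _ = D / 2 := by ring

lemma contractingWith_remainderMap (hmu : |mu| ≤ 1 / 10) :
    ContractingWith (1 / 2) (remainderMap hn ξ db Ψ lam mu) :=
  ⟨by rw [← NNReal.coe_lt_coe]; norm_num, LipschitzWith.of_dist_le_mul fun R R' =>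
    (dist_remainderMap_le hn hξ hdb hΨ hlam hlamB hmu R R').trans_eq (by push_cast; ring)⟩

lemma norm_remainderMap_zero_le (hml : |mu * lam⁻¹| ≤ B / 2) :
    ‖remainderMap hn ξ db Ψ lam mu 0‖ ≤ 8 * B ^ 2 := by
  have hB : 0 ≤ B := (norm_nonneg ξ).trans hξ
  have hPξ : ‖Pop L d 1 hn ξ‖ ≤ 2 * B := (norm_Pop_le _ _).trans (by gcongr)
  simp only [remainderMap, mul_zero, Pop_zero, smul_zero, add_zero]
  have hu : 6 * (lam * B) + 4 * (lam * B) ^ 2 ≤ 1 := by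
    have : 0 ≤ lam * B := by positivity
    nlinarith
  calc _ ≤ 2 * B ^ 2 + 2 * (B * (2 * B)) + lam * (2 * B ^ 3) + lam * (2 * (B ^ 2 * (2 * B)))
        + lam ^ 2 * (2 * (B ^ 3 * (2 * B))) + B / 2 * (2 * B) := by
        refine norm_add_le_of_le (norm_add_le_of_le (norm_add_le_of_le (norm_add_le_of_le
          (norm_add_le_of_le ?_ ?_) ?_) ?_) ?_) ?_
        · exact (norm_Pop_le _ _).trans (by gcongr)
        · exact norm_Pop_mul_le hn hξ hPξ
        · rw [norm_smul_of_nonneg hlam]; gcongr; exact (norm_Pop_le _ _).trans (by gcongr)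
        · rw [norm_smul_of_nonneg hlam]; gcongr; exact norm_Pop_mul_le hn hdb hPξ
        · rw [norm_smul_of_nonneg (by positivity)]; gcongr; exact norm_Pop_mul_le hn hΨ hPξ
        · rw [norm_smul, Real.norm_eq_abs]; gcongr
    _ = 7 * B ^ 2 + (6 * (lam * B) + 4 * (lam * B) ^ 2) * B ^ 2 := by ring
    _ ≤ 8 * B ^ 2 := by nlinarith

lemma norm_le_of_remainderMap_eq (hmu : |mu| ≤ 1 / 10) (hml : |mu * lam⁻¹| ≤ B / 2)
    {R : Pt L d n → ℝ} (hR : R = remainderMap hn ξ db Ψ lam mu R) : ‖R‖ ≤ 16 * B ^ 2 := by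
  have hcontr := contractingWith_remainderMap hn hξ hdb hΨ hlam hlamB hmu
  have hfp := hcontr.dist_fixedPoint_le 0
  rw [← hcontr.fixedPoint_unique hR.symm, dist_zero_left, dist_zero_left] at hfp
  calc ‖R‖ ≤ ‖remainderMap hn ξ db Ψ lam mu 0‖ / (1 - 1 / 2) := by exact_mod_cast hfp
    _ = 2 * ‖remainderMap hn ξ db Ψ lam mu 0‖ := by ring
    _ ≤ 16 * B ^ 2 := by linarith [norm_remainderMap_zero_le hn hξ hdb hΨ hlam hlamB hml]

lemma norm_psiUpdate_le {R : Pt L d n → ℝ} (hR : ‖R‖ ≤ 16 * B ^ 2) :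
    ‖psiUpdate hn ξ db Ψ lam R‖ ≤ (L : ℝ)⁻¹ * (20 * B ^ 3) := by
  have hB : 0 ≤ B := (norm_nonneg ξ).trans hξ
  have hPξ : ‖Pop L d 1 hn ξ‖ ≤ 2 * B := (norm_Pop_le _ _).trans (by gcongr)
  have hu : 18 * (lam * B) + 16 * (lam * B) ^ 2 ≤ 1 := by
    have : 0 ≤ lam * B := by positivity
    nlinarith
  rw [psiUpdate, norm_smul_of_nonneg (by positivity)]
  gcongr
  calc _ ≤ B ^ 3 + B * (16 * B ^ 2) + B ^ 2 * (2 * B) + lam * (B ^ 2 * (16 * B ^ 2))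
        + lam * (B ^ 3 * (2 * B)) + lam ^ 2 * (B ^ 3 * (16 * B ^ 2)) := by
        refine norm_add_le_of_le (norm_add_le_of_le (norm_add_le_of_le (norm_add_le_of_le
          (norm_add_le_of_le ?_ ?_) ?_) ?_) ?_) ?_
        · exact (norm_scale_le _ _).trans ((norm_Qop_le _ _).trans hΨ)
        · exact norm_scale_Qop_mul_le hn hξ hR
        · exact norm_scale_Qop_mul_le hn hdb hPξ
        · rw [norm_smul_of_nonneg hlam]; gcongr; exact norm_scale_Qop_mul_le hn hdb hR
        · rw [norm_smul_of_nonneg hlam]; gcongr; exact norm_scale_Qop_mul_le hn hΨ hPξ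
        · rw [norm_smul_of_nonneg (by positivity)]; gcongr; exact norm_scale_Qop_mul_le hn hΨ hR
    _ = 19 * B ^ 3 + (18 * (lam * B) + 16 * (lam * B) ^ 2) * B ^ 3 := by ring
    _ ≤ 20 * B ^ 3 := by nlinarith [pow_nonneg hB 3]

end Level

def IsRemainderFrom (m N : ℕ) (ξ db : ∀ n : ℕ, Pt L d n → ℝ) (lam mu : ℕ → ℝ)
    (Ψ R : ∀ n : ℕ, Pt L d n → ℝ) : Prop :=
  Ψ N = 0 ∧ ∀ (n : ℕ) (hn : 1 ≤ n), m < n → n ≤ N →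
    R n = remainderMap hn (ξ n) (db n) (Ψ n) (lam n) (mu n) (R n) ∧
    Ψ (n - 1) = psiUpdate hn (ξ n) (db n) (Ψ n) (lam n) (R n)

lemma isRemainder_iff {Ω : Type*} [MeasurableSpace Ω] {P : Measure Ω} {W : WhiteNoise L 2 P}
    {ω : Ω} {g r : ℝ} {N : ℕ} {Ψ R : ∀ n : ℕ, Pt L 2 n → ℝ} :
    IsRemainder L W ω g r N Ψ R ↔
      IsRemainderFrom 0 N (fun n x => W.ξ n x ω) (fun n => db L 2 W N n ω) (lamC L g)
        (muC L r g) Ψ R :=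
  and_congr_right' <| forall_congr' fun _ => forall_congr' fun hn =>
    ⟨fun h _ => h, fun h => h hn⟩

structure RecursionBounds (N : ℕ) (ξ db : ∀ n : ℕ, Pt L d n → ℝ) (lam mu B : ℕ → ℝ) : Prop where
  norm_ξ_le : ∀ n ≤ N, ‖ξ n‖ ≤ B n
  norm_db_le : ∀ n ≤ N, ‖db n‖ ≤ B n ^ 2
  lam_nonneg : ∀ n, 0 ≤ lam n
  lam_mul_le : ∀ n, 1 ≤ n → lam n * B n ≤ 1 / 20
  abs_mu_le : ∀ n, 1 ≤ n → |mu n| ≤ 1 / 10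
  abs_mu_mul_inv_le : ∀ n, 1 ≤ n → |mu n * (lam n)⁻¹| ≤ B n / 2
  inv_mul_cube_succ_le : ∀ n, (L : ℝ)⁻¹ * (20 * B (n + 1) ^ 3) ≤ B n ^ 3

namespace RecursionBounds

variable {N : ℕ} {ξ db : ∀ n : ℕ, Pt L d n → ℝ} {lam mu B : ℕ → ℝ}
  (hb : RecursionBounds N ξ db lam mu B)
include hb

lemma contractingWith {n : ℕ} (hn : 1 ≤ n) (hnN : n ≤ N) {Ψ : Pt L d n → ℝ}
    (hΨ : ‖Ψ‖ ≤ B n ^ 3) :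
    ContractingWith (1 / 2) (remainderMap hn (ξ n) (db n) Ψ (lam n) (mu n)) :=
  contractingWith_remainderMap hn (hb.norm_ξ_le n hnN) (hb.norm_db_le n hnN) hΨ
    (hb.lam_nonneg n) (hb.lam_mul_le n hn) (hb.abs_mu_le n hn)

lemma norm_psi_le {m : ℕ} {Ψ R : ∀ n : ℕ, Pt L d n → ℝ}
    (h : IsRemainderFrom m N ξ db lam mu Ψ R) {n : ℕ} (hmn : m ≤ n) (hnN : n ≤ N) :
    ‖Ψ n‖ ≤ B n ^ 3 := by
  induction hnN using Nat.decreasingInduction with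
  | self =>
    rw [h.1, norm_zero]
    exact pow_nonneg ((norm_nonneg _).trans (hb.norm_ξ_le N le_rfl)) 3
  | of_succ k hk ih =>
    have hk1 : 1 ≤ k + 1 := Nat.le_add_left 1 k
    obtain ⟨hR, hΨ⟩ := h.2 (k + 1) hk1 (by omega) hk
    have hΨk : Ψ k = psiUpdate hk1 (ξ (k + 1)) (db (k + 1)) (Ψ (k + 1)) (lam (k + 1)) (R (k + 1)) :=
      hΨ
    rw [hΨk]
    refine (norm_psiUpdate_le hk1 (hb.norm_ξ_le _ hk) (hb.norm_db_le _ hk) (ih (by omega))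
      (hb.lam_nonneg _) (hb.lam_mul_le _ hk1) ?_).trans (hb.inv_mul_cube_succ_le k)
    exact norm_le_of_remainderMap_eq hk1 (hb.norm_ξ_le _ hk) (hb.norm_db_le _ hk) (ih (by omega))
      (hb.lam_nonneg _) (hb.lam_mul_le _ hk1) (hb.abs_mu_le _ hk1) (hb.abs_mu_mul_inv_le _ hk1) hR

lemma remainder_eq {m : ℕ} {Ψ R Ψ' R' : ∀ n : ℕ, Pt L d n → ℝ}
    (h : IsRemainderFrom m N ξ db lam mu Ψ R) (h' : IsRemainderFrom m N ξ db lam mu Ψ' R')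
    {n : ℕ} (hn : 1 ≤ n) (hmn : m < n) (hnN : n ≤ N) (hΨ : Ψ n = Ψ' n) : R n = R' n := by
  have hR' := (h'.2 n hn hmn hnN).1
  rw [← hΨ] at hR'
  exact (hb.contractingWith hn hnN (hb.norm_psi_le h hmn.le hnN)).fixedPoint_unique'
    (h.2 n hn hmn hnN).1.symm hR'.symm

lemma psi_eq {m : ℕ} {Ψ R Ψ' R' : ∀ n : ℕ, Pt L d n → ℝ}
    (h : IsRemainderFrom m N ξ db lam mu Ψ R) (h' : IsRemainderFrom m N ξ db lam mu Ψ' R')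
    {n : ℕ} (hmn : m ≤ n) (hnN : n ≤ N) : Ψ n = Ψ' n := by
  induction hnN using Nat.decreasingInduction with
  | self => rw [h.1, h'.1]
  | of_succ k hk ih =>
    have hk1 : 1 ≤ k + 1 := Nat.le_add_left 1 k
    have hΨk : Ψ k = psiUpdate hk1 (ξ (k + 1)) (db (k + 1)) (Ψ (k + 1)) (lam (k + 1)) (R (k + 1)) :=
      (h.2 (k + 1) hk1 (by omega) hk).2
    have hΨk' : Ψ' k
        = psiUpdate hk1 (ξ (k + 1)) (db (k + 1)) (Ψ' (k + 1)) (lam (k + 1)) (R' (k + 1)) :=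
      (h'.2 (k + 1) hk1 (by omega) hk).2
    have hΨ := ih (by omega)
    rw [hΨk, hΨk', hΨ, hb.remainder_eq h h' hk1 (by omega) hk hΨ]

end RecursionBounds

/-- Chosen by `Classical.epsilon`: junk unless `remainderMap` has a fixed point. -/
noncomputable def levelFixedPoint {n : ℕ} (hn : 1 ≤ n) (ξ db Ψ : Pt L d n → ℝ) (lam mu : ℝ) :
    Pt L d n → ℝ :=
  Classical.epsilon fun R => R = remainderMap hn ξ db Ψ lam mu R

lemma levelFixedPoint_eq {n : ℕ} {hn : 1 ≤ n} {ξ db Ψ : Pt L d n → ℝ} {lam mu : ℝ} {K : NNReal}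
    (hf : ContractingWith K (remainderMap hn ξ db Ψ lam mu)) :
    levelFixedPoint hn ξ db Ψ lam mu
      = remainderMap hn ξ db Ψ lam mu (levelFixedPoint hn ξ db Ψ lam mu) :=
  Classical.epsilon_spec (p := fun R => R = remainderMap hn ξ db Ψ lam mu R)
    ⟨_, hf.fixedPoint_isFixedPt.symm⟩

noncomputable def topDownPsi (N : ℕ) (ξ db : ∀ n : ℕ, Pt L d n → ℝ) (lam mu : ℕ → ℝ) (n : ℕ) :
    Pt L d n → ℝ :=
  if n < N then
    psiUpdate (Nat.le_add_left 1 n) (ξ (n + 1)) (db (n + 1)) (topDownPsi N ξ db lam mu (n + 1))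
      (lam (n + 1)) (levelFixedPoint (Nat.le_add_left 1 n) (ξ (n + 1)) (db (n + 1))
        (topDownPsi N ξ db lam mu (n + 1)) (lam (n + 1)) (mu (n + 1)))
  else 0
termination_by N - n

noncomputable def topDownR (N : ℕ) (ξ db : ∀ n : ℕ, Pt L d n → ℝ) (lam mu : ℕ → ℝ) (n : ℕ) :
    Pt L d n → ℝ :=
  if hn : 1 ≤ n then levelFixedPoint hn (ξ n) (db n) (topDownPsi N ξ db lam mu n) (lam n) (mu n)
  else 0

lemma RecursionBounds.isRemainderFrom_topDown {N : ℕ} {ξ db : ∀ n : ℕ, Pt L d n → ℝ}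
    {lam mu B : ℕ → ℝ} (hb : RecursionBounds N ξ db lam mu B) {m : ℕ} (hmN : m ≤ N) :
    IsRemainderFrom m N ξ db lam mu (topDownPsi N ξ db lam mu) (topDownR N ξ db lam mu) := by
  induction hmN using Nat.decreasingInduction with
  | self =>
    refine ⟨?_, fun n _ hNn hnN => absurd hnN (by omega)⟩
    rw [topDownPsi, if_neg (lt_irrefl N)]
  | of_succ k hk ih =>
    refine ⟨ih.1, fun n hn hkn hnN => ?_⟩
    obtain rfl | hlt := (show n = k + 1 ∨ k + 1 < n by omega)
    · have hcontr := hb.contractingWith hn hnN (hb.norm_psi_le ih le_rfl hnN)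
      have hR : topDownR N ξ db lam mu (k + 1) = levelFixedPoint hn (ξ (k + 1)) (db (k + 1))
          (topDownPsi N ξ db lam mu (k + 1)) (lam (k + 1)) (mu (k + 1)) := by
        rw [topDownR, dif_pos hn]
      rw [hR]
      refine ⟨levelFixedPoint_eq hcontr, ?_⟩
      show topDownPsi N ξ db lam mu k = _
      rw [topDownPsi, if_pos hk]
    · exact ih.2 n hn hlt hnN

section GoodEvent

variable {Ω : Type*} [MeasurableSpace Ω] {P : Measure Ω} {W : WhiteNoise L d P} {κs g : ℝ}
  {ω : Ω}

lemma normBlock_le_of_mem_goodEvent (hg : 0 < g) (hω : ω ∈ goodEvent L d W κs g) {N n : ℕ}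
    (hn : n ≤ N) : normBlock L d W κs N n ω ≤ (2 * g)⁻¹ := by
  refine (ENNReal.ofReal_le_ofReal_iff (by positivity)).1 (le_trans ?_ hω)
  exact le_iSup₂ (f := fun N (n : Fin (N + 1)) => ENNReal.ofReal (normBlock L d W κs N n ω))
    N ⟨n, Nat.lt_succ_of_le hn⟩

lemma norm_noise_le_of_mem_goodEvent (hg : 0 < g) (hω : ω ∈ goodEvent L d W κs g) {N n : ℕ}
    (hn : n ≤ N) :
    ‖fun x => W.ξ n x ω‖ ≤ goodBound L κs g n ∧ ‖db L d W N n ω‖ ≤ goodBound L κs g n ^ 2 := by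
  have hL : (0 : ℝ) < L := Nat.cast_pos.2 (Nat.pos_of_ne_zero (NeZero.ne L))
  have hmax := normBlock_le_of_mem_goodEvent hg hω hn
  rw [normBlock, Real.rpow_neg hL.le, inv_mul_le_iff₀ (by positivity), ← goodBound] at hmax
  have hB : 0 ≤ goodBound L κs g n := by unfold goodBound; positivity
  refine ⟨(pi_norm_le_iff_of_nonneg hB).2 fun x => ?_, (pi_norm_le_iff_of_nonneg (by positivity)).2
    fun x => ?_⟩
  · exact (le_ciSup (Set.finite_range _).bddAbove x).trans ((le_max_left _ _).trans hmax)
  · have hx := (le_ciSup (Set.finite_range fun x => |db L d W N n ω x| ^ ((1 : ℝ) / 2)).bddAbove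
      x).trans ((le_max_right _ _).trans hmax)
    rwa [← Real.sqrt_eq_rpow, Real.sqrt_le_left hB] at hx

end GoodEvent

end

lemma goodBound_succ {L : ℕ} (hL : 0 < (L : ℝ)) (κs g : ℝ) (n : ℕ) :
    goodBound L κs g (n + 1) = goodBound L κs g n * (L : ℝ) ^ κs := by
  rw [goodBound, goodBound, Nat.cast_succ, mul_add_one, Real.rpow_add hL]
  ring

lemma abs_muC_mul_pow_le {r g : ℝ} (hL : 2 ≤ (L : ℝ)) (hr : 0 ≤ r) (hg : 0 ≤ g) (hg1 : g ≤ 1)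
    {n : ℕ} (hn : 1 ≤ n) : |muC L r g n| * (L : ℝ) ^ n ≤ (r + 1) / L := by
  have hLn : (0 : ℝ) < (L : ℝ) ^ n := by positivity
  have hc0 : 0 ≤ (1 - ((L : ℝ) ^ 2)⁻¹) * n * g ^ 2 := by
    have : ((L : ℝ) ^ 2)⁻¹ ≤ 1 := inv_le_one_of_one_le₀ (by nlinarith)
    have : 0 ≤ 1 - ((L : ℝ) ^ 2)⁻¹ := by linarith
    positivity
  have hc1 : (1 - ((L : ℝ) ^ 2)⁻¹) * n * g ^ 2 ≤ n := by
    calc (1 - ((L : ℝ) ^ 2)⁻¹) * (n : ℝ) * g ^ 2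
        = (n : ℝ) * g ^ 2 - ((L : ℝ) ^ 2)⁻¹ * (n : ℝ) * g ^ 2 := by ring
      _ ≤ (n : ℝ) * 1 - 0 := by gcongr <;> [exact pow_le_one₀ hg hg1; positivity]
      _ = (n : ℝ) := by ring
  calc |muC L r g n| * (L : ℝ) ^ n = |r - (1 - ((L : ℝ) ^ 2)⁻¹) * n * g ^ 2| / (L : ℝ) ^ n := by
        rw [muC, abs_mul, abs_of_pos (by positivity), two_mul, pow_add]
        field_simp
    _ ≤ (r + n) / (L : ℝ) ^ n := by
        gcongr
        rw [abs_le]; constructor <;> linarith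
    _ ≤ (r + 1) * (L : ℝ) ^ (n - 1) / (L : ℝ) ^ n := by
        gcongr; exact add_natCast_le_mul_pow hr hL hn
    _ = (r + 1) / L := by
        obtain ⟨k, rfl⟩ : ∃ k, n = k + 1 := ⟨n - 1, by omega⟩
        rw [Nat.add_sub_cancel, pow_succ]
        field_simp

lemma lamC_mul_goodBound_le {κs g : ℝ} (hκ : κs ≤ 1 / 2) (hL : 100 ≤ (L : ℝ)) (hg : 0 < g)
    {n : ℕ} (hn : 1 ≤ n) : lamC L g n * goodBound L κs g n ≤ 1 / 20 := by
  have hL0 : (0 : ℝ) < L := by linarith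
  have hn' : (1 : ℝ) ≤ n := by exact_mod_cast hn
  have h10 : 10 ≤ (L : ℝ) ^ ((1 - κs) * n) :=
    le_rpow_of_sq_le (by norm_num) (by linarith) (by linarith) (by nlinarith)
  have hsplit : (L : ℝ) ^ n = (L : ℝ) ^ (κs * n) * (L : ℝ) ^ ((1 - κs) * n) := by
    rw [← Real.rpow_add hL0, ← Real.rpow_natCast]; ring_nf
  have ha : 0 < (L : ℝ) ^ (κs * n) := Real.rpow_pos_of_pos hL0 _
  calc lamC L g n * goodBound L κs g n = (2 * (L : ℝ) ^ ((1 - κs) * n))⁻¹ := by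
        rw [lamC, goodBound, hsplit]; field_simp
    _ ≤ (2 * 10)⁻¹ := by gcongr
    _ = 1 / 20 := by norm_num

lemma abs_muC_mul_inv_lamC_le {κs r g : ℝ} (hκ : 0 ≤ κs) (hL : 1 ≤ (L : ℝ)) (hg : 0 < g)
    {n : ℕ} (hmu : |muC L r g n| * (L : ℝ) ^ n ≤ 1 / 10) :
    |muC L r g n * (lamC L g n)⁻¹| ≤ goodBound L κs g n / 2 := by
  have hLn : (0 : ℝ) < (L : ℝ) ^ n := by positivity
  have hg' := inv_pos.2 hg
  have hκn : 1 ≤ (L : ℝ) ^ (κs * n) := Real.one_le_rpow hL (by positivity)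
  calc |muC L r g n * (lamC L g n)⁻¹| = |muC L r g n| * (L : ℝ) ^ n * g⁻¹ := by
        rw [lamC, mul_inv, inv_inv, abs_mul,
          abs_of_pos (by positivity : (0 : ℝ) < (L : ℝ) ^ n * g⁻¹), mul_assoc]
    _ ≤ 1 / 10 * g⁻¹ := by gcongr
    _ ≤ goodBound L κs g n / 2 := by rw [goodBound, mul_inv]; nlinarith

lemma inv_mul_goodBound_succ_cube_le {κs g : ℝ} (hκ : κs ≤ 1 / 6) (hL : 400 ≤ (L : ℝ))
    (hg : 0 ≤ g) (n : ℕ) :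
    (L : ℝ)⁻¹ * (20 * goodBound L κs g (n + 1) ^ 3) ≤ goodBound L κs g n ^ 3 := by
  have hL0 : (0 : ℝ) < L := by linarith
  have hB : 0 ≤ goodBound L κs g n := by unfold goodBound; positivity
  have h20 : 20 ≤ (L : ℝ) ^ (1 - 3 * κs) :=
    le_rpow_of_sq_le (by norm_num) (by linarith) (by linarith) (by linarith)
  have hcube : ((L : ℝ) ^ κs) ^ 3 * (L : ℝ) ^ (1 - 3 * κs) = L := by
    rw [← Real.rpow_natCast, ← Real.rpow_mul hL0.le, ← Real.rpow_add hL0,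
      show κs * ((3 : ℕ) : ℝ) + (1 - 3 * κs) = 1 by push_cast; ring, Real.rpow_one]
  rw [goodBound_succ hL0, mul_pow]
  calc (L : ℝ)⁻¹ * (20 * (goodBound L κs g n ^ 3 * ((L : ℝ) ^ κs) ^ 3))
      ≤ (L : ℝ)⁻¹ * ((L : ℝ) ^ (1 - 3 * κs) * (goodBound L κs g n ^ 3 * ((L : ℝ) ^ κs) ^ 3)) := by
        gcongr
    _ = (L : ℝ)⁻¹ * (goodBound L κs g n ^ 3 * (((L : ℝ) ^ κs) ^ 3 * (L : ℝ) ^ (1 - 3 * κs))) := by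
        ring
    _ = goodBound L κs g n ^ 3 := by rw [hcube]; field_simp

section

variable [NeZero L]

lemma recursionBounds_of_mem_goodEvent {Ω : Type*} [MeasurableSpace Ω] {P : Measure Ω}
    {W : WhiteNoise L d P} {κs r g : ℝ} {ω : Ω} (hκ : 0 ≤ κs) (hκ' : κs ≤ 1 / 6) (hr : 0 ≤ r)
    (hL : 400 ≤ (L : ℝ)) (hLr : 10 * (r + 1) ≤ L) (hg : 0 < g) (hg1 : g ≤ 1)
    (hω : ω ∈ goodEvent L d W κs g) (N : ℕ) :
    RecursionBounds N (fun n x => W.ξ n x ω) (fun n => db L d W N n ω) (lamC L g) (muC L r g)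
      (goodBound L κs g) := by
  have hL1 : (1 : ℝ) ≤ L := by linarith
  have hmu : ∀ n, 1 ≤ n → |muC L r g n| * (L : ℝ) ^ n ≤ 1 / 10 := fun n hn =>
    (abs_muC_mul_pow_le (by linarith) hr hg.le hg1 hn).trans <| by
      rw [div_le_div_iff₀ (by linarith) (by norm_num)]; linarith
  exact
    { norm_ξ_le := fun n hn => (norm_noise_le_of_mem_goodEvent hg hω hn).1
      norm_db_le := fun n hn => (norm_noise_le_of_mem_goodEvent hg hω hn).2
      lam_nonneg := fun n => by unfold lamC; positivity
      lam_mul_le := fun n hn => lamC_mul_goodBound_le (by linarith) (by linarith) hg hn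
      abs_mu_le := fun n hn =>
        (le_mul_of_one_le_right (abs_nonneg _) (one_le_pow₀ hL1)).trans (hmu n hn)
      abs_mu_mul_inv_le := fun n hn => abs_muC_mul_inv_lamC_le hκ hL1 hg (hmu n hn)
      inv_mul_cube_succ_le := inv_mul_goodBound_succ_cube_le hκ' hL hg.le }

lemma rpow_neg_mul_abs_rpow_le_of_norm_le {κs g : ℝ} (hg : 0 < g) {n : ℕ}
    {f : Pt L d n → ℝ} (hf : ‖f‖ ≤ goodBound L κs g n ^ 3) (x : Pt L d n) :
    (L : ℝ) ^ (-(κs * n)) * |f x| ^ ((1 : ℝ) / 3) ≤ (2 * g)⁻¹ := by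
  have hL : (0 : ℝ) < L := Nat.cast_pos.2 (Nat.pos_of_ne_zero (NeZero.ne L))
  have hB : 0 ≤ goodBound L κs g n := by unfold goodBound; positivity
  have hx : |f x| ^ ((1 : ℝ) / 3) ≤ goodBound L κs g n := by
    calc |f x| ^ ((1 : ℝ) / 3) ≤ (goodBound L κs g n ^ 3) ^ ((3 : ℕ) : ℝ)⁻¹ := by
          rw [one_div, Nat.cast_ofNat]
          gcongr
          exact (norm_le_pi_norm f x).trans hf
      _ = goodBound L κs g n := Real.pow_rpow_inv_natCast hB (by norm_num)
  calc _ ≤ (L : ℝ) ^ (-(κs * n)) * goodBound L κs g n := by gcongr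
    _ = (2 * g)⁻¹ := by
      rw [goodBound, Real.rpow_neg hL.le, inv_mul_cancel_left₀ (by positivity)]

end

end Hier

open Hier in
/-- Fix `κ_s ∈ (0, 1/8]` and `r ≥ 1`. There exists `L₀ ∈ ℕ`
(depending only on `r`, `κ_s`) such that for every odd `L ≥ L₀`, every
`g ∈ (0,1]`, every `N ∈ ℕ` and every `ω ∈ Ω_g`: remainder fields
`(Ψ^{(N)}_{-n})`, `(R^{(N)}_{-n+1})` satisfying the fixed-point recursion
exist, they are unique, and every such family satisfies
`max_{0 ≤ n ≤ N} L^{-κ_s n} max_{x ∈ Λ^n} |Ψ^{(N)}_{-n}(x)|^{1/3} ≤ (2g)⁻¹`. -/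
theorem statement_15 (κs r : ℝ) (hκ : 0 < κs) (hκ' : κs ≤ 1 / 8) (hr : 1 ≤ r) :
    ∃ L₀ : ℕ, ∀ (L : ℕ) [NeZero L], Odd L → L₀ ≤ L →
      ∀ g : ℝ, 0 < g → g ≤ 1 →
      ∀ (Ω : Type) (_ : MeasurableSpace Ω) (P : Measure Ω),
        IsProbabilityMeasure P →
      ∀ (W : WhiteNoise L 2 P) (ω : Ω), ω ∈ goodEvent L 2 W κs g →
      ∀ N : ℕ,
        (∃ Ψ R : ∀ n : ℕ, Pt L 2 n → ℝ, IsRemainder L W ω g r N Ψ R) ∧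
        (∀ Ψ R Ψ' R' : ∀ n : ℕ, Pt L 2 n → ℝ,
          IsRemainder L W ω g r N Ψ R → IsRemainder L W ω g r N Ψ' R' →
          (∀ n : ℕ, n ≤ N → Ψ n = Ψ' n) ∧
          (∀ n : ℕ, 1 ≤ n → n ≤ N → R n = R' n)) ∧
        (∀ Ψ R : ∀ n : ℕ, Pt L 2 n → ℝ, IsRemainder L W ω g r N Ψ R →
          ∀ n : ℕ, n ≤ N → ∀ x : Pt L 2 n,
            (L : ℝ) ^ (-(κs * (n : ℝ))) * |Ψ n x| ^ ((1 : ℝ) / 3) ≤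
              (2 * g)⁻¹) := by
  refine ⟨⌈400 * r⌉₊, fun L _ _ hL g hg hg1 Ω _ P _ W ω hω N => ?_⟩
  have hL' : 400 * r ≤ L := Nat.ceil_le.1 hL
  have hb := recursionBounds_of_mem_goodEvent (r := r) hκ.le (by linarith) (by linarith)
    (by linarith) (by linarith) hg hg1 hω N
  refine ⟨⟨_, _, isRemainder_iff.2 (hb.isRemainderFrom_topDown N.zero_le)⟩,
    fun Ψ R Ψ' R' h h' => ?_, fun Ψ R h n hn => ?_⟩
  · rw [isRemainder_iff] at h h'
    exact ⟨fun n hn => hb.psi_eq h h' n.zero_le hn,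
      fun n hn1 hn => hb.remainder_eq h h' hn1 hn1 hn (hb.psi_eq h h' n.zero_le hn)⟩
  · rw [isRemainder_iff] at h
    exact rpow_neg_mul_abs_rpow_le_of_norm_le hg (hb.norm_psi_le h n.zero_le hn)
end
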